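/- arXiv:1306.0981 — 5 statements merged into one kernel-verified Lean document; each statement's English description precedes it below -/
import Mathlib

section
/- For integers n and r with 2 ≤ r ≤ n/2, if r ≤ ((n+2) - √(n+2))/2 then C(n,r) - C(n,r-1) ≥ C(n,r-1) - C(n,r-2). -/
/-!
Write `a, b, c` for `C(n, r-2), C(n, r-1), C(n, r)`. The ratios `c / b = (n-r+1)/r` and
`a / b = (r-1)/(n-r+2)` turn the second difference into
`r (n-r+2) (c - 2b + a) = b ((n + 2 - 2r)² - (n + 2))`,
and the hypothesis on `r` says exactly that `√(n+2) ≤ n + 2 - 2r`, so the bracket is nonnegative.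
-/

namespace Nat

theorem cast_choose_succ_mul {R : Type*} [Ring R] (n k : ℕ) :
    (n.choose (k + 1) : R) * (k + 1) = n.choose k * (n - k) := by
  rcases le_or_gt k n with hkn | hnk
  · have h := congrArg (Nat.cast : ℕ → R) (choose_succ_right_eq n k)
    push_cast [Nat.cast_sub hkn] at h
    exact h
  · simp [choose_eq_zero_of_lt hnk, choose_eq_zero_of_lt (hnk.trans k.lt_succ_self)]

theorem cast_choose_second_diff_mul {R : Type*} [CommRing R] (n k : ℕ) :
    ((k + 2) * (n - k) : R) * (n.choose (k + 2) - 2 * n.choose (k + 1) + n.choose k) =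
      n.choose (k + 1) * ((n - 2 * k - 2) ^ 2 - (n + 2)) := by
  have h₁ := cast_choose_succ_mul (R := R) n (k + 1)
  have h₀ := cast_choose_succ_mul (R := R) n k
  push_cast at h₁
  linear_combination (n - k : R) * h₁ - (k + 2 : R) * h₀

theorem cast_choose_second_diff_nonneg {n k : ℕ} (h : (n + 2 : ℝ) ≤ (n - 2 * k - 2) ^ 2) :
    0 ≤ (n.choose (k + 2) - 2 * n.choose (k + 1) + n.choose k : ℝ) := by
  rcases lt_or_ge k n with hkn | hnk
  · have hpos : (0 : ℝ) < (k + 2) * (n - k) := by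
      have : (k : ℝ) < n := by exact_mod_cast hkn
      nlinarith
    refine nonneg_of_mul_nonneg_right ?_ hpos
    rw [cast_choose_second_diff_mul]
    exact mul_nonneg (Nat.cast_nonneg _) (sub_nonneg.2 h)
  · simp [choose_eq_zero_of_lt (Nat.lt_succ_of_le hnk),
      choose_eq_zero_of_lt (Nat.lt_succ_of_le hnk |>.trans (k + 1).lt_succ_self)]

end Nat

theorem stmt_1_general (n r : ℕ) (hr : 2 ≤ r)
    (h : (r : ℝ) ≤ ((n + 2) - Real.sqrt (n + 2)) / 2) :
    (n.choose r : ℝ) - n.choose (r - 1) ≥ (n.choose (r - 1) : ℝ) - n.choose (r - 2) := by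
  obtain ⟨k, rfl⟩ : ∃ k, r = k + 2 := ⟨r - 2, by omega⟩
  have hsqrt : Real.sqrt (n + 2) ≤ n + 2 - 2 * (k + 2 : ℝ) := by push_cast at h; linarith
  have hsq : (n + 2 : ℝ) ≤ (n - 2 * k - 2) ^ 2 := by
    have := (Real.sqrt_le_iff.1 hsqrt).2
    linarith
  have hdiff := Nat.cast_choose_second_diff_nonneg hsq
  simp only [Nat.add_sub_cancel, show k + 2 - 1 = k + 1 from rfl]
  linarith

theorem stmt_1 (n r : ℕ) (hr : 2 ≤ r) (hrn : 2 * r ≤ n)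
    (h : (r : ℝ) ≤ ((n + 2) - Real.sqrt (n + 2)) / 2) :
    (n.choose r : ℝ) - n.choose (r - 1) ≥ (n.choose (r - 1) : ℝ) - n.choose (r - 2) :=
  stmt_1_general n r hr h
end

section
/- For every integer k ≥ 1, the number r₀ = (1/2)(-3 + √(3 + 3k + √(12 + 20k + 9k²))) is not an integer. -/
/-!
Squaring twice, an integer value of r₀ would make 9k² + 20k + 12 the square of an integer. For
k ≥ 0 this number lies strictly between the consecutive squares (3k + 3)² and (3k + 4)², so its
square root, and with it r₀, is irrational.
-/

theorem Int.not_isSquare_of_sq_lt_of_lt_sq {a n : ℤ} (hlt : a ^ 2 < n) (hgt : n < (a + 1) ^ 2) :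
    ¬IsSquare n := by
  rintro ⟨t, rfl⟩
  rw [← sq, sq_lt_sq] at hlt hgt
  have := abs_add_le a 1
  rw [abs_one] at this
  omega

theorem Irrational.sqrt {x : ℝ} (h : Irrational x) (hx : 0 ≤ x) : Irrational √x :=
  .of_pow 2 (by rwa [Real.sq_sqrt hx])

theorem not_isSquare_twelve_add_twenty_mul_add_nine_mul_sq {k : ℤ} (hk : 0 ≤ k) :
    ¬IsSquare (12 + 20 * k + 9 * k ^ 2) :=
  Int.not_isSquare_of_sq_lt_of_lt_sq (a := 3 * k + 3) (by nlinarith) (by nlinarith)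

theorem irrational_neg_three_add_sqrt_div_two {k : ℤ} (hk : 0 ≤ k) :
    Irrational ((-3 + √(3 + 3 * (k : ℝ) + √(12 + 20 * k + 9 * (k : ℝ) ^ 2))) / 2) := by
  have hk' : (0 : ℝ) ≤ k := by exact_mod_cast hk
  have hsqrt : Irrational √(12 + 20 * k + 9 * (k : ℝ) ^ 2) := by
    have := (irrational_sqrt_intCast_iff_of_nonneg (by positivity)).2
      (not_isSquare_twelve_add_twenty_mul_add_nine_mul_sq hk)
    exact_mod_cast this
  have hinner : Irrational (3 + 3 * (k : ℝ) + √(12 + 20 * k + 9 * (k : ℝ) ^ 2)) := by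
    exact_mod_cast hsqrt.intCast_add (3 + 3 * k)
  have := ((hinner.sqrt (by positivity)).intCast_add (-3)).div_natCast two_ne_zero
  exact_mod_cast this

theorem stmt_11 (k : ℤ) (hk : 1 ≤ k) :
    ¬ ∃ m : ℤ,
      (-3 + Real.sqrt (3 + 3 * (k : ℝ) + Real.sqrt (12 + 20 * k + 9 * (k : ℝ) ^ 2))) / 2 = m := by
  rintro ⟨m, hm⟩
  exact (irrational_neg_three_add_sqrt_div_two (by omega)).ne_int m hm
end

section
/- For d = 3 and n = 3k with k ≥ 1, if (p₁,p₂,p₃) = (k+a+b, k+a, k-2a-b) with integers a > 0 and b ≥ 0 and k-2a-b ≥ 0, then [f(p₁,p₂,p₃) - f(p₁+1,p₂-1,p₃)] + [f(p₁,p₂,p₃) - f(p₁,p₂-1,p₃+1)] < 0; in particular f cannot attain its maximum over partitions of 3k at such a triple. -/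
/-- Frobenius multiplicity for SU(3), extended by `0` to invalid partitions. -/
noncomputable def f3 (p₁ p₂ p₃ : ℤ) : ℚ :=
  if p₂ ≤ p₁ ∧ p₃ ≤ p₂ ∧ 0 ≤ p₃ then
    (Nat.factorial (p₁ + p₂ + p₃).toNat : ℚ) * ((p₁ - p₂ + 1) * (p₁ - p₃ + 2) * (p₂ - p₃ + 1)) /
      ((Nat.factorial (p₁ + 2).toNat : ℚ) * (Nat.factorial (p₂ + 1).toNat) * (Nat.factorial p₃.toNat))
  else 0

/-! Moving one box of `p` from the second row to the first or to the third multiplies `f3 p` by an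
explicit rational factor, since the factorials telescope. Hence `2 f3 p < f3 p' + f3 p''` for the
two neighbours `p' = (p₁ + 1, p₂ - 1, p₃)` and `p'' = (p₁, p₂ - 1, p₃ + 1)` reduces to a polynomial
inequality in `k, a, b`, and one of `p'`, `p''`, both partitions of `3k`, has a larger value. -/

open Nat

/-- The Vandermonde determinant of the shifted parts `(p₁ + 2, p₂ + 1, p₃)`: the numerator of
`f3`. -/
def shiftedVandermonde (p₁ p₂ p₃ : ℤ) : ℚ :=
  (p₁ - p₂ + 1) * (p₁ - p₃ + 2) * (p₂ - p₃ + 1)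

lemma shiftedVandermonde_pos {p₁ p₂ p₃ : ℤ} (h₁₂ : p₂ ≤ p₁) (h₂₃ : p₃ ≤ p₂) :
    0 < shiftedVandermonde p₁ p₂ p₃ := by
  have h₁₂' : (p₂ : ℚ) ≤ p₁ := by exact_mod_cast h₁₂
  have h₂₃' : (p₃ : ℚ) ≤ p₂ := by exact_mod_cast h₂₃
  unfold shiftedVandermonde
  have : (0 : ℚ) < p₁ - p₃ + 2 := by linarith
  have : (0 : ℚ) < p₁ - p₂ + 1 := by linarith
  have : (0 : ℚ) < p₂ - p₃ + 1 := by linarith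
  positivity

lemma factorial_toNat_succ {z : ℤ} (hz : 0 ≤ z) :
    ((z + 1).toNat ! : ℚ) = (z + 1) * (z.toNat ! : ℚ) := by
  rw [show (z + 1).toNat = z.toNat + 1 by omega, factorial_succ]
  have hcast : ((z.toNat : ℕ) : ℚ) = z := by exact_mod_cast Int.toNat_of_nonneg hz
  push_cast
  rw [hcast]

lemma f3_of_le {p₁ p₂ p₃ : ℤ} (h₁₂ : p₂ ≤ p₁) (h₂₃ : p₃ ≤ p₂) (h₃ : 0 ≤ p₃) :
    f3 p₁ p₂ p₃ = ((p₁ + p₂ + p₃).toNat ! : ℚ) * shiftedVandermonde p₁ p₂ p₃ /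
      ((p₁ + 2).toNat ! * (p₂ + 1).toNat ! * p₃.toNat !) :=
  if_pos ⟨h₁₂, h₂₃, h₃⟩

lemma f3_pos {p₁ p₂ p₃ : ℤ} (h₁₂ : p₂ ≤ p₁) (h₂₃ : p₃ ≤ p₂) (h₃ : 0 ≤ p₃) :
    0 < f3 p₁ p₂ p₃ := by
  rw [f3_of_le h₁₂ h₂₃ h₃]
  have := shiftedVandermonde_pos h₁₂ h₂₃
  positivity

lemma f3_raise_box {p₁ p₂ p₃ : ℤ} (h₁₂ : p₂ ≤ p₁) (h₂₃ : p₃ < p₂) (h₃ : 0 ≤ p₃) :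
    (p₁ + 3) * shiftedVandermonde p₁ p₂ p₃ * f3 (p₁ + 1) (p₂ - 1) p₃ =
      (p₂ + 1) * shiftedVandermonde (p₁ + 1) (p₂ - 1) p₃ * f3 p₁ p₂ p₃ := by
  rw [f3_of_le h₁₂ h₂₃.le h₃, f3_of_le (by omega) (by omega) h₃,
    show p₁ + 1 + (p₂ - 1) + p₃ = p₁ + p₂ + p₃ by ring, show p₁ + 1 + 2 = p₁ + 2 + 1 by ring,
    sub_add_cancel, factorial_toNat_succ (by omega : 0 ≤ p₁ + 2),
    factorial_toNat_succ (by omega : 0 ≤ p₂)]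
  push_cast
  have : (0 : ℚ) < p₂ + 1 := by exact_mod_cast (by omega : 0 < p₂ + 1)
  have : (0 : ℚ) < p₁ + 2 + 1 := by exact_mod_cast (by omega : 0 < p₁ + 2 + 1)
  field_simp
  ring

lemma f3_lower_box {p₁ p₂ p₃ : ℤ} (h₁₂ : p₂ ≤ p₁) (h₂₃ : p₃ + 1 < p₂) (h₃ : 0 ≤ p₃) :
    (p₃ + 1) * shiftedVandermonde p₁ p₂ p₃ * f3 p₁ (p₂ - 1) (p₃ + 1) =
      (p₂ + 1) * shiftedVandermonde p₁ (p₂ - 1) (p₃ + 1) * f3 p₁ p₂ p₃ := by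
  rw [f3_of_le h₁₂ (by omega) h₃, f3_of_le (by omega) (by omega) (by omega),
    show p₁ + (p₂ - 1) + (p₃ + 1) = p₁ + p₂ + p₃ by ring,
    sub_add_cancel, factorial_toNat_succ h₃, factorial_toNat_succ (by omega : 0 ≤ p₂)]
  have : (0 : ℚ) < p₂ + 1 := by exact_mod_cast (by omega : 0 < p₂ + 1)
  have : (0 : ℚ) < p₃ + 1 := by exact_mod_cast (by omega : 0 < p₃ + 1)
  field_simp

lemma two_mul_f3_lt_add {p₁ p₂ p₃ : ℤ} (h₁₂ : p₂ ≤ p₁) (h₂₃ : p₃ + 1 < p₂) (h₃ : 0 ≤ p₃)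
    (h : 2 * ((p₁ + 3) * (p₃ + 1) * shiftedVandermonde p₁ p₂ p₃) <
      (p₂ + 1) * ((p₃ + 1) * shiftedVandermonde (p₁ + 1) (p₂ - 1) p₃ +
        (p₁ + 3) * shiftedVandermonde p₁ (p₂ - 1) (p₃ + 1))) :
    2 * f3 p₁ p₂ p₃ < f3 (p₁ + 1) (p₂ - 1) p₃ + f3 p₁ (p₂ - 1) (p₃ + 1) := by
  have hraise := f3_raise_box h₁₂ (by omega) h₃
  have hlower := f3_lower_box h₁₂ h₂₃ h₃
  have hf := f3_pos h₁₂ (by omega) h₃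
  have hc : (0 : ℚ) < (p₁ + 3) * (p₃ + 1) * shiftedVandermonde p₁ p₂ p₃ := by
    have := shiftedVandermonde_pos h₁₂ (by omega : p₃ ≤ p₂)
    have : (0 : ℚ) < p₁ + 3 := by exact_mod_cast (by omega : 0 < p₁ + 3)
    have : (0 : ℚ) < p₃ + 1 := by exact_mod_cast (by omega : 0 < p₃ + 1)
    positivity
  refine lt_of_mul_lt_mul_left ?_ hc.le
  calc (p₁ + 3) * (p₃ + 1) * shiftedVandermonde p₁ p₂ p₃ * (2 * f3 p₁ p₂ p₃)
      = 2 * ((p₁ + 3) * (p₃ + 1) * shiftedVandermonde p₁ p₂ p₃) * f3 p₁ p₂ p₃ := by ring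
    _ < (p₂ + 1) * ((p₃ + 1) * shiftedVandermonde (p₁ + 1) (p₂ - 1) p₃ +
        (p₁ + 3) * shiftedVandermonde p₁ (p₂ - 1) (p₃ + 1)) * f3 p₁ p₂ p₃ :=
      mul_lt_mul_of_pos_right h hf
    _ = (p₁ + 3) * (p₃ + 1) * shiftedVandermonde p₁ p₂ p₃ *
        (f3 (p₁ + 1) (p₂ - 1) p₃ + f3 p₁ (p₂ - 1) (p₃ + 1)) := by
      linear_combination -(p₃ + 1) * hraise - (p₁ + 3) * hlower

/-- Writing `a = 1 + α` and `k = 2a + b + γ`, the difference of the two sides is a polynomial in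
`α, b, γ ≥ 0` whose only negative terms `-6 b²γ - 4 b³γ` are absorbed by
`3b(b - γ)² + 2b(b² - γ)²`. -/
lemma shiftedVandermonde_ineq (k a b : ℤ) (ha : 0 < a) (hb : 0 ≤ b) (hp : 0 ≤ k - 2 * a - b) :
    2 * ((((k + a + b : ℤ) : ℚ) + 3) * (((k - 2 * a - b : ℤ) : ℚ) + 1) *
        shiftedVandermonde (k + a + b) (k + a) (k - 2 * a - b)) <
      (((k + a : ℤ) : ℚ) + 1) * ((((k - 2 * a - b : ℤ) : ℚ) + 1) *
          shiftedVandermonde (k + a + b + 1) (k + a - 1) (k - 2 * a - b) +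
        (((k + a + b : ℤ) : ℚ) + 3) *
          shiftedVandermonde (k + a + b) (k + a - 1) (k - 2 * a - b + 1)) := by
  obtain ⟨α, hα, rfl⟩ : ∃ α : ℤ, 0 ≤ α ∧ a = 1 + α := ⟨a - 1, by omega, by ring⟩
  obtain ⟨γ, hγ, rfl⟩ : ∃ γ : ℤ, 0 ≤ γ ∧ k = 2 * (1 + α) + b + γ := ⟨_, hp, by ring⟩
  have hα' : (0 : ℚ) ≤ α := by exact_mod_cast hα
  have hb' : (0 : ℚ) ≤ b := by exact_mod_cast hb
  have hγ' : (0 : ℚ) ≤ γ := by exact_mod_cast hγ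
  have hsq : (0 : ℚ) ≤ 3 * b * (b - γ) ^ 2 + 2 * b * (b ^ 2 - γ) ^ 2 := by positivity
  rw [← sub_pos]
  refine lt_of_lt_of_le ?_ (sub_le_self _ hsq)
  unfold shiftedVandermonde
  push_cast
  ring_nf
  positivity

theorem stmt_12_general (k a b : ℤ) (ha : 0 < a) (hb : 0 ≤ b)
    (hp : 0 ≤ k - 2 * a - b) :
    ((f3 (k + a + b) (k + a) (k - 2 * a - b) - f3 (k + a + b + 1) (k + a - 1) (k - 2 * a - b)) +
      (f3 (k + a + b) (k + a) (k - 2 * a - b) - f3 (k + a + b) (k + a - 1) (k - 2 * a - b + 1)) < 0) ∧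
    ∃ q₁ q₂ q₃ : ℤ, q₂ ≤ q₁ ∧ q₃ ≤ q₂ ∧ 0 ≤ q₃ ∧ q₁ + q₂ + q₃ = 3 * k ∧
      f3 (k + a + b) (k + a) (k - 2 * a - b) < f3 q₁ q₂ q₃ := by
  have hlt := two_mul_f3_lt_add (by omega) (by omega) hp (shiftedVandermonde_ineq k a b ha hb hp)
  refine ⟨by linarith, ?_⟩
  rcases lt_or_ge (f3 (k + a + b) (k + a) (k - 2 * a - b))
      (f3 (k + a + b + 1) (k + a - 1) (k - 2 * a - b)) with hup | hup
  · exact ⟨_, _, _, by omega, by omega, hp, by ring, hup⟩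
  · exact ⟨k + a + b, k + a - 1, k - 2 * a - b + 1, by omega, by omega, by omega, by ring,
      by linarith⟩

theorem stmt_12 (k a b : ℤ) (hk : 1 ≤ k) (ha : 0 < a) (hb : 0 ≤ b)
    (hp : 0 ≤ k - 2 * a - b) :
    ((f3 (k + a + b) (k + a) (k - 2 * a - b) - f3 (k + a + b + 1) (k + a - 1) (k - 2 * a - b)) +
      (f3 (k + a + b) (k + a) (k - 2 * a - b) - f3 (k + a + b) (k + a - 1) (k - 2 * a - b + 1)) < 0) ∧
    ∃ q₁ q₂ q₃ : ℤ, q₂ ≤ q₁ ∧ q₃ ≤ q₂ ∧ 0 ≤ q₃ ∧ q₁ + q₂ + q₃ = 3 * k ∧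
      f3 (k + a + b) (k + a) (k - 2 * a - b) < f3 q₁ q₂ q₃ :=
  stmt_12_general k a b ha hb hp
end

section
/- Let r₂ = (1/4)(-9 + √(49 + 24k)) for a positive integer k. Then r₂ is a nonnegative integer if and only if k = 5 + 13q + 6q² or k = 10 + 17q + 6q² for some integer q ≥ 0. -/
/-!
Since `√(49 + 24k) = 4m + 9` is equivalent to `49 + 24k = (4m + 9)²`, the question is which
`m` make `(4m + 9)² - 49` divisible by `24`. It always is by `8`, and it is by `3` exactly when
`3 ∤ m`; writing `m = 3q + 1` or `m = 3q + 2` gives `(12q + 13)² = 49 + 24(5 + 13q + 6q²)` and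
`(12q + 17)² = 49 + 24(10 + 17q + 6q²)`.
-/

lemma Real.sqrt_natCast_eq_natCast_iff {n m : ℕ} : √(n : ℝ) = m ↔ n = m ^ 2 := by
  rw [Real.sqrt_eq_iff_eq_sq (by positivity) (by positivity)]
  norm_cast

lemma div_four_eq_natCast_iff (k m : ℕ) :
    (-9 + √(49 + 24 * k)) / 4 = m ↔ 49 + 24 * k = (4 * m + 9) ^ 2 := by
  have h : (-9 + √(49 + 24 * k)) / 4 = m ↔
      √((49 + 24 * k : ℕ) : ℝ) = ((4 * m + 9 : ℕ) : ℝ) := by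
    push_cast
    constructor <;> intro h <;> linarith
  rw [h, Real.sqrt_natCast_eq_natCast_iff]

lemma exists_four_mul_add_nine_sq_eq_iff (k : ℕ) :
    (∃ m : ℕ, 49 + 24 * k = (4 * m + 9) ^ 2) ↔
      ∃ q : ℕ, k = 5 + 13 * q + 6 * q ^ 2 ∨ k = 10 + 17 * q + 6 * q ^ 2 := by
  constructor
  · rintro ⟨m, hm⟩
    obtain ⟨q, rfl | rfl | rfl⟩ : ∃ q, m = 3 * q ∨ m = 3 * q + 1 ∨ m = 3 * q + 2 :=
      ⟨m / 3, by omega⟩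
    · have hm3 := congrArg (· % 3) hm
      simp [Nat.add_mod, Nat.mul_mod, Nat.pow_mod] at hm3
    · exact ⟨q, Or.inl (by linarith)⟩
    · exact ⟨q, Or.inr (by linarith)⟩
  · rintro ⟨q, rfl | rfl⟩
    · exact ⟨3 * q + 1, by ring⟩
    · exact ⟨3 * q + 2, by ring⟩

theorem stmt_15_general (k : ℕ) :
    (∃ m : ℕ, (-9 + Real.sqrt (49 + 24 * k)) / 4 = m) ↔
      ∃ q : ℕ, k = 5 + 13 * q + 6 * q ^ 2 ∨ k = 10 + 17 * q + 6 * q ^ 2 := by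
  simp only [div_four_eq_natCast_iff]
  exact exists_four_mul_add_nine_sq_eq_iff k

theorem stmt_15 (k : ℕ) (hk : 1 ≤ k) :
    (∃ m : ℕ, (-9 + Real.sqrt (49 + 24 * k)) / 4 = m) ↔
      ∃ q : ℕ, k = 5 + 13 * q + 6 * q ^ 2 ∨ k = 10 + 17 * q + 6 * q ^ 2 :=
  stmt_15_general k
end

section
/- For every integer k ≥ 1, with r₁ = (1/4)(-10+√(60+24k)), r₃ = (1/4)(-8+√(40+24k)), r₀ = (1/2)(-3+√(3+3k+√(12+20k+9k²))), and r̂₀ = (1/2)(-3+√(6+3k+√(41+38k+9k²))), the chain of strict inequalities r₁ < r₃ < r₀ < r̂₀ < r₁ + 1 < r₃ + 1 holds. -/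
/-! Each inequality of the chain is an affine rearrangement of a comparison between square roots,
settled by squaring. The nested radicals are controlled by the bounds
`3k + 10/3 < √(12 + 20k + 9k²)`, from `(3k + 10/3)² = 9k² + 20k + 100/9`, and
`√(41 + 38k + 9k²) < 3k + 9`, from `(3k + 9)² = 9k² + 54k + 81`. -/

open Real

section

variable {x : ℝ}

theorem three_mul_add_ten_div_three_lt_sqrt (x : ℝ) :
    3 * x + 10 / 3 < √(12 + 20 * x + 9 * x ^ 2) :=
  lt_sqrt_of_sq_lt (by nlinarith)

theorem sqrt_lt_three_mul_add_nine (hx : 0 ≤ x) :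
    √(41 + 38 * x + 9 * x ^ 2) < 3 * x + 9 :=
  (sqrt_lt' (by linarith)).2 (by nlinarith)

theorem two_lt_sqrt_nested (hx : 0 ≤ x) :
    2 < √(3 + 3 * x + √(12 + 20 * x + 9 * x ^ 2)) :=
  lt_sqrt_of_sq_lt (by linarith [three_mul_add_ten_div_three_lt_sqrt x])

theorem sqrt_sixty_lt_two_add_sqrt_forty (hx : 0 ≤ x) :
    √(60 + 24 * x) < 2 + √(40 + 24 * x) := by
  have hsq : √(40 + 24 * x) ^ 2 = 40 + 24 * x := sq_sqrt (by linarith)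
  have hgt : 4 < √(40 + 24 * x) := lt_sqrt_of_sq_lt (by linarith)
  exact (sqrt_lt' (by linarith)).2 (by nlinarith)

theorem sqrt_forty_lt_two_add_two_mul_sqrt_nested (hx : 0 ≤ x) :
    √(40 + 24 * x) < 2 + 2 * √(3 + 3 * x + √(12 + 20 * x + 9 * x ^ 2)) := by
  have hB := three_mul_add_ten_div_three_lt_sqrt x
  have hA := two_lt_sqrt_nested hx
  have hsq : √(3 + 3 * x + √(12 + 20 * x + 9 * x ^ 2)) ^ 2
      = 3 + 3 * x + √(12 + 20 * x + 9 * x ^ 2) := sq_sqrt (by linarith)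
  exact (sqrt_lt' (by linarith)).2 (by nlinarith)

theorem sqrt_nested_lt_sqrt_nested_hat (hx : 0 ≤ x) :
    √(3 + 3 * x + √(12 + 20 * x + 9 * x ^ 2)) < √(6 + 3 * x + √(41 + 38 * x + 9 * x ^ 2)) := by
  have hB : √(12 + 20 * x + 9 * x ^ 2) < √(41 + 38 * x + 9 * x ^ 2) :=
    sqrt_lt_sqrt (by positivity) (by linarith)
  exact sqrt_lt_sqrt (by positivity) (by linarith)

theorem two_mul_sqrt_nested_hat_lt_sqrt_sixty (hx : 0 ≤ x) :
    2 * √(6 + 3 * x + √(41 + 38 * x + 9 * x ^ 2)) < √(60 + 24 * x) := by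
  have hB := sqrt_lt_three_mul_add_nine hx
  have hsq : √(6 + 3 * x + √(41 + 38 * x + 9 * x ^ 2)) ^ 2
      = 6 + 3 * x + √(41 + 38 * x + 9 * x ^ 2) := sq_sqrt (by positivity)
  exact lt_sqrt_of_sq_lt (by nlinarith)

end

theorem stmt_17_general (k : ℕ)
    (r₁ r₃ r₀ r₀' : ℝ)
    (h₁ : r₁ = (-10 + Real.sqrt (60 + 24 * k)) / 4)
    (h₃ : r₃ = (-8 + Real.sqrt (40 + 24 * k)) / 4)
    (h₀ : r₀ = (-3 + Real.sqrt (3 + 3 * k + Real.sqrt (12 + 20 * k + 9 * (k : ℝ) ^ 2))) / 2)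
    (h₀' : r₀' = (-3 + Real.sqrt (6 + 3 * k + Real.sqrt (41 + 38 * k + 9 * (k : ℝ) ^ 2))) / 2) :
    r₁ < r₃ ∧ r₃ < r₀ ∧ r₀ < r₀' ∧ r₀' < r₁ + 1 ∧ r₁ + 1 < r₃ + 1 := by
  have hk : (0 : ℝ) ≤ k := k.cast_nonneg
  have h₁₃ := sqrt_sixty_lt_two_add_sqrt_forty hk
  have h₃₀ := sqrt_forty_lt_two_add_two_mul_sqrt_nested hk
  have h₀₀' := sqrt_nested_lt_sqrt_nested_hat hk
  have h₀'₁ := two_mul_sqrt_nested_hat_lt_sqrt_sixty hk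
  subst h₁ h₃ h₀ h₀'
  refine ⟨?_, ?_, ?_, ?_, ?_⟩ <;> linarith

theorem stmt_17 (k : ℕ) (hk : 1 ≤ k)
    (r₁ r₃ r₀ r₀' : ℝ)
    (h₁ : r₁ = (-10 + Real.sqrt (60 + 24 * k)) / 4)
    (h₃ : r₃ = (-8 + Real.sqrt (40 + 24 * k)) / 4)
    (h₀ : r₀ = (-3 + Real.sqrt (3 + 3 * k + Real.sqrt (12 + 20 * k + 9 * (k : ℝ) ^ 2))) / 2)
    (h₀' : r₀' = (-3 + Real.sqrt (6 + 3 * k + Real.sqrt (41 + 38 * k + 9 * (k : ℝ) ^ 2))) / 2) :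
    r₁ < r₃ ∧ r₃ < r₀ ∧ r₀ < r₀' ∧ r₀' < r₁ + 1 ∧ r₁ + 1 < r₃ + 1 :=
  stmt_17_general k r₁ r₃ r₀ r₀' h₁ h₃ h₀ h₀'
end
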